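/- arXiv:2603.24717 — 2 statements merged into one kernel-verified Lean document; each statement's English description precedes it below -/
import Mathlib

section
/- Let x, z ∈ F₂ⁿ be nonzero with ⟨x,z⟩ = 1, and let j be an index where both x and z are nonzero. Then conjugation by the product Λ(Z_j, X^{x+e_j}) · Λ(X_j, Z^{z+e_j}) maps the Pauli operator X^x Z^z to X^{e_j} Z^{e_j} (i.e., to a weight-one Pauli Y on qubit j, up to the original phase). -/
open Matrix

/-- The CSS permutation unitary `U_A |r⟩ = |Ar⟩`. -/
noncomputable def Ucss {n : ℕ} (A : Matrix (Fin n) (Fin n) (ZMod 2)) :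
    Matrix (Fin n → ZMod 2) (Fin n → ZMod 2) ℂ :=
  fun s r => if s = A.mulVec r then 1 else 0

/-- Inner product of bit vectors over `F₂`. -/
def ipF2 {n : ℕ} (x z : Fin n → ZMod 2) : ZMod 2 := ∑ i, x i * z i

/-- `X^x`: tensor product of Pauli `X`s indicated by the bits of `x`. -/
noncomputable def Xpow {n : ℕ} (x : Fin n → ZMod 2) :
    Matrix (Fin n → ZMod 2) (Fin n → ZMod 2) ℂ :=
  fun s r => if s = r + x then 1 else 0

/-- `Z^z`: tensor product of Pauli `Z`s indicated by the bits of `z`. -/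
noncomputable def Zpow {n : ℕ} (z : Fin n → ZMod 2) :
    Matrix (Fin n → ZMod 2) (Fin n → ZMod 2) ℂ :=
  Matrix.diagonal fun r => (-1 : ℂ) ^ (ipF2 z r).val

/-- Controlled-Pauli operator `Λ(P₁,P₂) = (I+P₁)/2 + ((I−P₁)/2)·P₂`. -/
noncomputable def ctrlPauli {n : ℕ}
    (P₁ P₂ : Matrix (Fin n → ZMod 2) (Fin n → ZMod 2) ℂ) :
    Matrix (Fin n → ZMod 2) (Fin n → ZMod 2) ℂ :=
  ((1 : ℂ) / 2) • ((1 : Matrix (Fin n → ZMod 2) (Fin n → ZMod 2) ℂ) + P₁) +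
    ((1 : ℂ) / 2) •
      (((1 : Matrix (Fin n → ZMod 2) (Fin n → ZMod 2) ℂ) - P₁) * P₂)

/-!
On computational basis states both controlled Paulis act by the same transvection of `F₂ⁿ`:
`Λ(Z^u, X^v)` (when `⟨u, v⟩ = 0`) and `Λ(X^v, Z^u)` send `|r⟩` to `|r + ⟨u, r⟩ v⟩`. So `C` is a
permutation matrix of an additive permutation `σ` of `F₂ⁿ`, and conjugating `X^x Z^z` by it
gives `X^w Z^{z'}` with `σ w = x` and `⟨z, σ r⟩ = ⟨z', r⟩`. For the two transvections at hand
`w = e_j` and `z' = e_j`: this is where `⟨x, z⟩ = 1` and `x_j = z_j = 1` enter.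
-/

namespace Matrix

variable {n R : Type*} [Fintype n] [DecidableEq n] [NonAssocSemiring R] [StarRing R]

theorem permMatrix_mul_mul_conjTranspose (σ : Equiv.Perm n) (M : Matrix n n R) :
    σ.permMatrix R * M * (σ.permMatrix R)ᴴ = M.submatrix σ σ := by
  rw [conjTranspose_permMatrix, PEquiv.toMatrix_toPEquiv_mul, PEquiv.mul_toMatrix_toPEquiv]
  rfl

end Matrix

theorem ZMod.eq_zero_or_eq_one (c : ZMod 2) : c = 0 ∨ c = 1 := by
  revert c
  decide

section Pauli

variable {n : ℕ}

theorem ipF2_eq_dotProduct (u v : Fin n → ZMod 2) : ipF2 u v = u ⬝ᵥ v := rfl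

theorem involutive_add_ipF2_smul {u v : Fin n → ZMod 2} (h : ipF2 u v = 0) :
    Function.Involutive fun r => r + ipF2 u r • v := fun r => by
  simp only [ipF2_eq_dotProduct] at *
  rw [dotProduct_add, dotProduct_smul, h, smul_zero, add_zero, add_assoc, ZModModule.add_self,
    add_zero]

def transvectionF2 (u v : Fin n → ZMod 2) (h : ipF2 u v = 0) : Equiv.Perm (Fin n → ZMod 2) :=
  (involutive_add_ipF2_smul h).toPerm

@[simp]
theorem transvectionF2_apply {u v : Fin n → ZMod 2} (h : ipF2 u v = 0) (r : Fin n → ZMod 2) :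
    transvectionF2 u v h r = r + ipF2 u r • v := rfl

theorem transvectionF2_involutive {u v : Fin n → ZMod 2} (h : ipF2 u v = 0) :
    Function.Involutive (transvectionF2 u v h) :=
  involutive_add_ipF2_smul h

theorem transvectionF2_add {u v : Fin n → ZMod 2} (h : ipF2 u v = 0) (r s : Fin n → ZMod 2) :
    transvectionF2 u v h (r + s) = transvectionF2 u v h r + transvectionF2 u v h s := by
  simp only [transvectionF2_apply, ipF2_eq_dotProduct, dotProduct_add, add_smul]
  abel

theorem ipF2_transvectionF2 {u v : Fin n → ZMod 2} (h : ipF2 u v = 0) (z r : Fin n → ZMod 2) :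
    ipF2 z (transvectionF2 u v h r) = ipF2 (z + ipF2 z v • u) r := by
  simp only [transvectionF2_apply, ipF2_eq_dotProduct, dotProduct_add, add_dotProduct,
    dotProduct_smul, smul_dotProduct, smul_eq_mul]
  ring

theorem permMatrix_transvectionF2_apply {u v : Fin n → ZMod 2} (h : ipF2 u v = 0)
    (s r : Fin n → ZMod 2) :
    (transvectionF2 u v h).permMatrix ℂ s r = if s = transvectionF2 u v h r then 1 else 0 := by
  simp only [Equiv.Perm.permMatrix, PEquiv.toMatrix_apply, Equiv.toPEquiv_apply, Option.mem_def,
    Option.some.injEq, (transvectionF2_involutive h).eq_iff]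

theorem Xpow_apply (v s r : Fin n → ZMod 2) : Xpow v s r = if s = r + v then 1 else 0 := rfl

theorem Zpow_apply (u s r : Fin n → ZMod 2) :
    Zpow u s r = (-1 : ℂ) ^ (ipF2 u r).val * (1 : Matrix (Fin n → ZMod 2) _ ℂ) s r := by
  by_cases hsr : s = r <;> simp [Zpow, one_apply, hsr]

theorem mul_Zpow_apply (M : Matrix (Fin n → ZMod 2) (Fin n → ZMod 2) ℂ) (u s r : Fin n → ZMod 2) :
    (M * Zpow u) s r = M s r * (-1 : ℂ) ^ (ipF2 u r).val :=
  mul_diagonal ..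

theorem Zpow_mul_Xpow_apply {u v : Fin n → ZMod 2} (h : ipF2 u v = 0) (s r : Fin n → ZMod 2) :
    (Zpow u * Xpow v) s r = (-1 : ℂ) ^ (ipF2 u r).val * Xpow v s r := by
  rw [Zpow, diagonal_mul, Xpow_apply]
  split_ifs with hs
  · rw [hs, ipF2_eq_dotProduct, dotProduct_add, ← ipF2_eq_dotProduct, ← ipF2_eq_dotProduct, h,
      add_zero]
  · rw [mul_zero, mul_zero]

theorem ctrlPauli_Zpow_Xpow {u v : Fin n → ZMod 2} (h : ipF2 u v = 0) :
    ctrlPauli (Zpow u) (Xpow v) = (transvectionF2 u v h).permMatrix ℂ := by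
  ext s r
  simp only [ctrlPauli, sub_mul, one_mul, Matrix.add_apply, Matrix.sub_apply, Matrix.smul_apply,
    smul_eq_mul, Zpow_apply, Zpow_mul_Xpow_apply h, permMatrix_transvectionF2_apply,
    transvectionF2_apply]
  rcases ZMod.eq_zero_or_eq_one (ipF2 u r) with hr | hr
  · simp only [hr, zero_smul, add_zero, ← one_apply, ZMod.val_zero]
    ring
  · simp only [hr, one_smul, ← Xpow_apply, ZMod.val_one]
    ring

theorem ctrlPauli_Xpow_Zpow {u v : Fin n → ZMod 2} (h : ipF2 u v = 0) :
    ctrlPauli (Xpow v) (Zpow u) = (transvectionF2 u v h).permMatrix ℂ := by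
  ext s r
  simp only [ctrlPauli, Matrix.add_apply, Matrix.smul_apply, smul_eq_mul, mul_Zpow_apply,
    Matrix.sub_apply, permMatrix_transvectionF2_apply, transvectionF2_apply]
  rcases ZMod.eq_zero_or_eq_one (ipF2 u r) with hr | hr
  · simp only [hr, zero_smul, add_zero, ← one_apply, ZMod.val_zero]
    ring
  · simp only [hr, one_smul, ← Xpow_apply, ZMod.val_one]
    ring

theorem permMatrix_mul_Xpow_mul_Zpow_mul_conjTranspose (σ : Equiv.Perm (Fin n → ZMod 2))
    {x z w z' : Fin n → ZMod 2} (hσx : ∀ r, σ (r + w) = σ r + x)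
    (hσz : ∀ r, ipF2 z (σ r) = ipF2 z' r) :
    σ.permMatrix ℂ * (Xpow x * Zpow z) * (σ.permMatrix ℂ)ᴴ = Xpow w * Zpow z' := by
  ext s r
  simp only [permMatrix_mul_mul_conjTranspose, submatrix_apply, mul_Zpow_apply, Xpow_apply,
    ← hσx, σ.injective.eq_iff, hσz]

end Pauli

theorem cssOrbit_anticomm_case_general {n : ℕ} (x z : Fin n → ZMod 2) (j : Fin n)
    (hxz : ipF2 x z = 1)
    (hxj : x j = 1) (hzj : z j = 1) :
    let ej : Fin n → ZMod 2 := Pi.single j 1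
    let C := ctrlPauli (Zpow ej) (Xpow (x + ej)) * ctrlPauli (Xpow ej) (Zpow (z + ej))
    C * (Xpow x * Zpow z) * Cᴴ = Xpow ej * Zpow ej := by
  intro e C
  have ipF2_e_left (v : Fin n → ZMod 2) : ipF2 e v = v j := single_one_dotProduct j v
  have ipF2_e_right (v : Fin n → ZMod 2) : ipF2 v e = v j := dotProduct_single_one v j
  have hej : e j = 1 := Pi.single_eq_same j 1
  have h₁ : ipF2 e (x + e) = 0 := by rw [ipF2_e_left, Pi.add_apply, hxj, hej, ZModModule.add_self]
  have h₂ : ipF2 (z + e) e = 0 := by rw [ipF2_e_right, Pi.add_apply, hzj, hej, ZModModule.add_self]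
  have hC : C = (transvectionF2 (z + e) e h₂ * transvectionF2 e (x + e) h₁).permMatrix ℂ := by
    rw [permMatrix_mul, ← ctrlPauli_Zpow_Xpow, ← ctrlPauli_Xpow_Zpow]
  rw [hC]
  apply permMatrix_mul_Xpow_mul_Zpow_mul_conjTranspose
  · have hx : transvectionF2 (z + e) e h₂ x = x := by
      rw [transvectionF2_apply, ipF2_eq_dotProduct, add_dotProduct, dotProduct_comm,
        ← ipF2_eq_dotProduct, hxz, ← ipF2_eq_dotProduct, ipF2_e_left, hxj, ZModModule.add_self,
        zero_smul, add_zero]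
    have he : transvectionF2 e (x + e) h₁ e = x := by
      rw [transvectionF2_apply, ipF2_e_left, hej, one_smul, add_comm x, ← add_assoc,
        ZModModule.add_self, zero_add]
    intro r
    rw [Equiv.Perm.mul_apply, Equiv.Perm.mul_apply, transvectionF2_add, transvectionF2_add, he, hx]
  · intro r
    rw [Equiv.Perm.mul_apply, ipF2_transvectionF2, ipF2_e_right, hzj, one_smul, ← add_assoc,
      ZModModule.add_self, zero_add, ipF2_transvectionF2, h₁, zero_smul, add_zero]

/-- CSS-Orbit, case `⟨x,z⟩ = 1`: conjugation by
`Λ(Z_j, X^{x+e_j}) Λ(X_j, Z^{z+e_j})` maps `X^x Z^z` to `X^{e_j} Z^{e_j}`. -/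
theorem cssOrbit_anticomm_case {n : ℕ} (x z : Fin n → ZMod 2) (j : Fin n)
    (hx : x ≠ 0) (hz : z ≠ 0) (hxz : ipF2 x z = 1)
    (hxj : x j = 1) (hzj : z j = 1) :
    let ej : Fin n → ZMod 2 := Pi.single j 1
    let C := ctrlPauli (Zpow ej) (Xpow (x + ej)) * ctrlPauli (Xpow ej) (Zpow (z + ej))
    C * (Xpow x * Zpow z) * Cᴴ = Xpow ej * Zpow ej :=
  cssOrbit_anticomm_case_general x z j hxz hxj hzj
end

section
/- Every Pauli operator on n qubits can be mapped by conjugation with a product of at most two CSS controlled-Pauli operators Λ(X^a, Z^b) (with ⟨a,b⟩ = 0) to a Pauli operator supported on at most two qubits, of the form ±i^l times one of I, X_j, Y_j, Z_j, or Y_j Y_k. -/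
/-!
Over `F₂`, the CSS controlled-Pauli `Λ(X^a, Z^b)` with `⟨a, b⟩ = 0` is the permutation matrix of
the involutive transvection `τ_{a,b} : r ↦ r + ⟨b, r⟩ a`, so conjugating by it sends `X^x Z^z` to
`X^{τ_{a,b} x} Z^{τ_{b,a} z}` without any phase.

If `x_j = 1`, conjugating by `Λ(X^{x+e_j}, Z^{e_j})` turns the `X`-part into `e_j`. If the new
`Z`-part `z'` is nonzero, conjugating by `Λ(X^{e_k}, Z^{z'+e_k})` with `z'_k = 1` turns it into
`e_k`, and fixes `X^{e_j}` as soon as `(z' + e_k)_j = 0`: take `k = j` if `z'_j = 1`, and any `k`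
otherwise. When `x = 0`, the first step is applied to the `Z`-part instead.
-/

open Matrix

theorem Matrix.permMatrix_mul_mul_conjTranspose_s17 {ι R : Type*} [Fintype ι] [DecidableEq ι]
    [NonAssocSemiring R] [StarRing R] (σ : Equiv.Perm ι) (M : Matrix ι ι R) :
    σ.permMatrix R * M * (σ.permMatrix R)ᴴ = M.submatrix σ σ := by
  rw [conjTranspose_permMatrix, PEquiv.toMatrix_toPEquiv_mul, PEquiv.mul_toMatrix_toPEquiv,
    submatrix_submatrix, Equiv.Perm.inv_def, Equiv.symm_symm]
  rfl

namespace CSSOrbit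

variable {n : ℕ}

theorem ipF2_eq_dotProduct (x z : Fin n → ZMod 2) : ipF2 x z = x ⬝ᵥ z := rfl

theorem add_self_eq_zero_of_zmod_two {ι : Type*} (v : ι → ZMod 2) : v + v = 0 :=
  funext fun i => CharTwo.add_self_eq_zero (v i)

abbrev transvection (a b : Fin n → ZMod 2) :
    (Fin n → ZMod 2) →ₗ[ZMod 2] (Fin n → ZMod 2) :=
  LinearMap.transvection (dotProductEquiv (ZMod 2) (Fin n) b) a

theorem transvection_apply (a b r : Fin n → ZMod 2) :
    transvection a b r = r + (b ⬝ᵥ r) • a := rfl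

theorem transvection_transvection {a b : Fin n → ZMod 2} (h : a ⬝ᵥ b = 0) (r : Fin n → ZMod 2) :
    transvection a b (transvection a b r) = r := by
  rw [dotProduct_comm] at h
  rw [LinearMap.transvection.comp_of_left_eq_apply h, add_self_eq_zero_of_zmod_two,
    LinearMap.transvection.of_right_eq_zero, LinearMap.id_apply]

theorem dotProduct_transvection (a b z r : Fin n → ZMod 2) :
    z ⬝ᵥ transvection a b r = transvection b a z ⬝ᵥ r := by
  simp only [transvection_apply, dotProduct_add, add_dotProduct, dotProduct_smul,
    smul_dotProduct, smul_eq_mul, dotProduct_comm z a]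
  ring

theorem Xpow_submatrix (e : (Fin n → ZMod 2) ≃ₗ[ZMod 2] (Fin n → ZMod 2)) (x : Fin n → ZMod 2) :
    (Xpow x).submatrix e e = Xpow (e.symm x) := by
  ext s r
  refine if_congr ?_ rfl rfl
  rw [show r + e.symm x = e.symm (e r + x) by simp, e.eq_symm_apply]

theorem Zpow_submatrix (e : (Fin n → ZMod 2) ≃ (Fin n → ZMod 2)) {z z' : Fin n → ZMod 2}
    (hz : ∀ r, z ⬝ᵥ e r = z' ⬝ᵥ r) :
    (Zpow z).submatrix e e = Zpow z' := by
  rw [Zpow, submatrix_diagonal_equiv]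
  exact congrArg diagonal (funext fun r => congrArg (fun c : ZMod 2 => (-1 : ℂ) ^ c.val) (hz r))

theorem permMatrix_conj_Xpow_mul_Zpow (e : (Fin n → ZMod 2) ≃ₗ[ZMod 2] (Fin n → ZMod 2))
    {x z z' : Fin n → ZMod 2} (hz : ∀ r, z ⬝ᵥ e r = z' ⬝ᵥ r) :
    Equiv.Perm.permMatrix ℂ e.toEquiv * (Xpow x * Zpow z) * (Equiv.Perm.permMatrix ℂ e.toEquiv)ᴴ =
      Xpow (e.symm x) * Zpow z' := by
  rw [permMatrix_mul_mul_conjTranspose_s17, ← submatrix_mul_equiv _ _ _ e.toEquiv]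
  exact congrArg₂ (· * ·) (Xpow_submatrix e x) (Zpow_submatrix e.toEquiv hz)

theorem ctrlPauli_Xpow_Zpow_apply (a b s r : Fin n → ZMod 2) :
    ctrlPauli (Xpow a) (Zpow b) s r = if s = transvection a b r then 1 else 0 := by
  rw [transvection_apply]
  -- `Λ(X^a, Z^b)` acts on `|r⟩` as the identity if `⟨b, r⟩ = 0` and as `X^a` if `⟨b, r⟩ = 1`.
  obtain h | h : b ⬝ᵥ r = 0 ∨ b ⬝ᵥ r = 1 := by generalize b ⬝ᵥ r = c; revert c; decide
  all_goals
    simp only [ctrlPauli, Zpow, Xpow, mul_diagonal, Matrix.add_apply, Matrix.sub_apply,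
      Matrix.smul_apply, one_apply, ipF2_eq_dotProduct, h, ZMod.val_zero, ZMod.val_one,
      zero_smul, one_smul, add_zero]
    split_ifs <;> simp_all <;> norm_num

noncomputable def transvectionEquiv {a b : Fin n → ZMod 2} (h : a ⬝ᵥ b = 0) :
    (Fin n → ZMod 2) ≃ₗ[ZMod 2] (Fin n → ZMod 2) :=
  LinearEquiv.transvection (f := dotProductEquiv (ZMod 2) (Fin n) b) (v := a)
    (by rwa [dotProductEquiv_apply_apply, dotProduct_comm])

theorem transvectionEquiv_symm_apply {a b : Fin n → ZMod 2} (h : a ⬝ᵥ b = 0) (r : Fin n → ZMod 2) :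
    (transvectionEquiv h).symm r = transvection a b r :=
  (transvectionEquiv h).symm_apply_eq.2 (transvection_transvection h r).symm

theorem ctrlPauli_Xpow_Zpow {a b : Fin n → ZMod 2} (h : a ⬝ᵥ b = 0) :
    ctrlPauli (Xpow a) (Zpow b) = Equiv.Perm.permMatrix ℂ (transvectionEquiv h).toEquiv := by
  ext s r
  rw [ctrlPauli_Xpow_Zpow_apply, Equiv.Perm.permMatrix, PEquiv.toMatrix_apply]
  refine if_congr ?_ rfl rfl
  rw [Option.mem_def, Equiv.toPEquiv_apply, Option.some_inj, LinearEquiv.coe_toEquiv,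
    ← transvectionEquiv_symm_apply h, LinearEquiv.eq_symm_apply]

theorem ctrlPauli_conj {a b : Fin n → ZMod 2} (h : a ⬝ᵥ b = 0) (x z : Fin n → ZMod 2) :
    ctrlPauli (Xpow a) (Zpow b) * (Xpow x * Zpow z) * (ctrlPauli (Xpow a) (Zpow b))ᴴ =
      Xpow (transvection a b x) * Zpow (transvection b a z) := by
  rw [ctrlPauli_Xpow_Zpow h,
    permMatrix_conj_Xpow_mul_Zpow (transvectionEquiv h) (dotProduct_transvection a b z),
    transvectionEquiv_symm_apply]

theorem ctrlPauli_mul_ctrlPauli_conj {a₁ b₁ a₂ b₂ : Fin n → ZMod 2} (h₁ : a₁ ⬝ᵥ b₁ = 0)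
    (h₂ : a₂ ⬝ᵥ b₂ = 0) (c : ℂ) (x z : Fin n → ZMod 2) :
    (ctrlPauli (Xpow a₁) (Zpow b₁) * ctrlPauli (Xpow a₂) (Zpow b₂)) * (c • (Xpow x * Zpow z)) *
        (ctrlPauli (Xpow a₁) (Zpow b₁) * ctrlPauli (Xpow a₂) (Zpow b₂))ᴴ =
      c • (Xpow (transvection a₁ b₁ (transvection a₂ b₂ x)) *
        Zpow (transvection b₁ a₁ (transvection b₂ a₂ z))) := by
  rw [← ctrlPauli_conj h₁, ← ctrlPauli_conj h₂]
  simp only [conjTranspose_mul, mul_smul_comm, smul_mul_assoc, mul_assoc]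

theorem transvection_add_single_self {v : Fin n → ZMod 2} {k : Fin n} (hk : v k = 1) :
    transvection (v + Pi.single k 1) (Pi.single k 1) v = Pi.single k 1 := by
  rw [transvection_apply, single_dotProduct, one_mul, hk, one_smul, ← add_assoc,
    add_self_eq_zero_of_zmod_two, zero_add]

theorem add_single_dotProduct_single_self {v : Fin n → ZMod 2} {k : Fin n} (hk : v k = 1) :
    (v + Pi.single k 1) ⬝ᵥ Pi.single k 1 = 0 := by
  rw [dotProduct_single, mul_one, Pi.add_apply, hk, Pi.single_eq_same]
  decide

theorem exists_apply_eq_one {v : Fin n → ZMod 2} (hv : v ≠ 0) : ∃ k, v k = 1 :=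
  (Function.ne_iff.mp hv).imp fun _ hk => Fin.eq_one_of_ne_zero _ hk

theorem exists_transvection_eq_single {v : Fin n → ZMod 2} (hv : v ≠ 0) :
    ∃ a b k, a ⬝ᵥ b = 0 ∧ transvection a b v = Pi.single k 1 := by
  obtain ⟨k, hk⟩ := exists_apply_eq_one hv
  exact ⟨_, _, k, add_single_dotProduct_single_self hk, transvection_add_single_self hk⟩

theorem exists_apply_eq_one_and_add_single_apply_eq_zero {v : Fin n → ZMod 2} (hv : v ≠ 0)
    (j : Fin n) : ∃ k, v k = 1 ∧ (v + Pi.single k 1 : Fin n → ZMod 2) j = 0 := by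
  by_cases hj : v j = 1
  · refine ⟨j, hj, ?_⟩
    rw [Pi.add_apply, hj, Pi.single_eq_same]
    decide
  · obtain ⟨k, hk⟩ := exists_apply_eq_one hv
    have hkj : j ≠ k := by rintro rfl; exact hj hk
    refine ⟨k, hk, ?_⟩
    rw [Pi.add_apply, Pi.single_eq_of_ne hkj, add_zero]
    exact not_not.1 fun h0 => hj (Fin.eq_one_of_ne_zero _ h0)

theorem hammingNorm_single_le_one (k : Fin n) :
    hammingNorm (Pi.single k 1 : Fin n → ZMod 2) ≤ 1 := by
  refine Finset.card_le_one.2 fun i hi j hj => ?_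
  simp only [Finset.mem_filter, Finset.mem_univ, true_and] at hi hj
  have mem_single : ∀ {i}, (Pi.single k 1 : Fin n → ZMod 2) i ≠ 0 → i = k :=
    fun hi => not_not.1 fun hik => hi (Pi.single_eq_of_ne hik _)
  rw [mem_single hi, mem_single hj]

theorem card_filter_le_two {x z : Fin n → ZMod 2} (hx : hammingNorm x ≤ 1)
    (hz : hammingNorm z ≤ 1) :
    (Finset.univ.filter fun i => x i ≠ 0 ∨ z i ≠ 0).card ≤ 2 := by
  rw [Finset.filter_or]
  exact (Finset.card_union_le _ _).trans (add_le_add hx hz)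

theorem exists_transvection_fixing_single (z : Fin n → ZMod 2) (j : Fin n) :
    ∃ a b, a ⬝ᵥ b = 0 ∧ transvection a b (Pi.single j 1) = Pi.single j 1 ∧
      hammingNorm (transvection b a z) ≤ 1 := by
  by_cases hz : z = 0
  · exact ⟨0, 0, dotProduct_zero 0, by simp, by simp [hz]⟩
  obtain ⟨k, hk, hkj⟩ := exists_apply_eq_one_and_add_single_apply_eq_zero hz j
  refine ⟨Pi.single k 1, z + Pi.single k 1, ?_, ?_, ?_⟩
  · rw [dotProduct_comm]
    exact add_single_dotProduct_single_self hk
  · rw [transvection_apply, dotProduct_single, hkj, zero_mul, zero_smul, add_zero]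
  · rw [transvection_add_single_self hk]
    exact hammingNorm_single_le_one k

theorem exists_transvections_reduce (x z : Fin n → ZMod 2) :
    ∃ a₁ b₁ a₂ b₂ : Fin n → ZMod 2, a₁ ⬝ᵥ b₁ = 0 ∧ a₂ ⬝ᵥ b₂ = 0 ∧
      hammingNorm (transvection a₁ b₁ (transvection a₂ b₂ x)) ≤ 1 ∧
      hammingNorm (transvection b₁ a₁ (transvection b₂ a₂ z)) ≤ 1 := by
  by_cases hx : x = 0
  · subst hx
    by_cases hz : z = 0
    · exact ⟨0, 0, 0, 0, by simp [hz]⟩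
    obtain ⟨a, b, k, hab, hk⟩ := exists_transvection_eq_single hz
    refine ⟨0, 0, b, a, dotProduct_zero 0, by rwa [dotProduct_comm], by simp, ?_⟩
    simpa [hk] using hammingNorm_single_le_one k
  obtain ⟨a₂, b₂, j, h₂, hj⟩ := exists_transvection_eq_single hx
  obtain ⟨a₁, b₁, h₁, hfix, hz⟩ := exists_transvection_fixing_single (transvection b₂ a₂ z) j
  exact ⟨a₁, b₁, a₂, b₂, h₁, h₂, by rw [hj, hfix]; exact hammingNorm_single_le_one j, hz⟩

end CSSOrbit

open CSSOrbit

/-- Correctness of the CSS-Orbit algorithm: every Pauli operator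
`i^l X^x Z^z` can be mapped by conjugation with a product of at most two CSS
controlled-Pauli operators `Λ(X^a, Z^b)` (with `⟨a,b⟩ = 0`) to a Pauli
operator `i^m X^{x'} Z^{z'}` supported on at most two qubits. -/
theorem cssOrbit_correct {n : ℕ} (l : ℕ) (x z : Fin n → ZMod 2) :
    ∃ (a₁ b₁ a₂ b₂ : Fin n → ZMod 2) (m : ℕ) (x' z' : Fin n → ZMod 2),
      ipF2 a₁ b₁ = 0 ∧ ipF2 a₂ b₂ = 0 ∧
      (Finset.univ.filter fun i => x' i ≠ 0 ∨ z' i ≠ 0).card ≤ 2 ∧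
      (ctrlPauli (Xpow a₁) (Zpow b₁) * ctrlPauli (Xpow a₂) (Zpow b₂)) *
          ((Complex.I ^ l) • (Xpow x * Zpow z)) *
          (ctrlPauli (Xpow a₁) (Zpow b₁) * ctrlPauli (Xpow a₂) (Zpow b₂))ᴴ =
        (Complex.I ^ m) • (Xpow x' * Zpow z') := by
  obtain ⟨a₁, b₁, a₂, b₂, h₁, h₂, hx', hz'⟩ := exists_transvections_reduce x z
  exact ⟨a₁, b₁, a₂, b₂, l, _, _, h₁, h₂, card_filter_le_two hx' hz',
    ctrlPauli_mul_ctrlPauli_conj h₁ h₂ _ x z⟩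
end
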